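/- Let 1 < α < 2. Then sup over ξ ∈ ℝ³ of the integral ∫_{ℝ³} ‖ ‖ξ‖^(α−2)·ξ − ‖σ‖^(α−2)·σ ‖^{−2} · (1+‖σ‖)^{−10} dσ is finite; i.e. there exists C depending only on α with ∫_{ℝ³} ‖ ‖ξ‖^(α−2)·ξ − ‖σ‖^(α−2)·σ ‖^{−2} (1+‖σ‖)^{−10} dσ ≤ C for all ξ ∈ ℝ³. -/

import Mathlib

/-!
Write `F x = ‖x‖ ^ (α - 2) • x`. Expanding `‖a • x - b • y‖²` as
`(a‖x‖ - b‖y‖)² + 2ab(‖x‖‖y‖ - ⟪x, y⟫)` and comparing term by term with `‖x - y‖²`, the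
concavity of `r ↦ r ^ (α - 1)` controls the radial part and `‖x‖ ^ (α - 2) ≤ ‖y‖ ^ (α - 2)`
the angular part, giving `(α - 1) ‖ξ - σ‖ ≤ (1 + max ‖ξ‖ ‖σ‖) ‖F ξ - F σ‖`. Hence the
integrand is at most a constant times `1_{‖σ - ξ‖ < 1} ‖σ - ξ‖⁻² + (1 + ‖σ‖)⁻⁸`; both terms
are integrable on `ℝ³`, and by translation invariance the integral of the first does not
depend on `ξ`.
-/

open MeasureTheory
open scoped ENNReal

open Metric RealInnerProductSpace

theorem mul_rpow_sub_one_mul_sub_le_rpow_sub_rpow {p r s : ℝ} (hp₀ : 0 ≤ p) (hp₁ : p ≤ 1)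
    (hs : 0 ≤ s) (hr : 0 < r) :
    p * r ^ (p - 1) * (r - s) ≤ r ^ p - s ^ p := by
  have bernoulli := rpow_one_add_le_one_add_mul_self (s := s / r - 1)
    (by linarith [div_nonneg hs hr.le]) hp₀ hp₁
  rw [add_sub_cancel, Real.div_rpow hs hr.le, div_le_iff₀ (by positivity)] at bernoulli
  rw [Real.rpow_sub_one hr.ne']
  have : (1 + p * (s / r - 1)) * r ^ p = r ^ p - p * (r ^ p / r) * (r - s) := by
    field_simp; ring
  linarith

theorem inv_one_add_le_rpow {m q : ℝ} (hm : 0 < m) (hq₁ : -1 ≤ q) (hq₀ : q ≤ 0) :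
    (1 + m)⁻¹ ≤ m ^ q := by
  rcases le_total m 1 with h | h
  · calc (1 + m)⁻¹ ≤ 1 := inv_le_one_of_one_le₀ (by linarith)
      _ ≤ m ^ q := Real.one_le_rpow_of_pos_of_le_one_of_nonpos hm h hq₀
  · calc (1 + m)⁻¹ ≤ m⁻¹ := inv_anti₀ hm (by linarith)
      _ = m ^ (-1 : ℝ) := (Real.rpow_neg_one m).symm
      _ ≤ m ^ q := Real.rpow_le_rpow_of_exponent_le h hq₁

theorem inv_sq_mul_inv_pow_le {c t w D : ℝ} (n : ℕ) (hc : 0 < c) (ht : 0 < t) (hw : 0 < w)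
    (hD : c * t ≤ (w + t) * D) :
    (D ^ 2)⁻¹ * (w ^ (n + 2))⁻¹ ≤ 2 / c ^ 2 * ((t ^ 2)⁻¹ * (w ^ n)⁻¹ + (w ^ (n + 2))⁻¹) := by
  have hD0 : 0 < D := pos_of_mul_pos_right (mul_pos hc ht |>.trans_le hD) (by linarith)
  have hsq : (c * t) ^ 2 ≤ 2 * (w ^ 2 + t ^ 2) * D ^ 2 := by
    nlinarith [pow_le_pow_left₀ (by positivity) hD 2, sq_nonneg (w - t)]
  have hrhs : 2 / c ^ 2 * ((t ^ 2)⁻¹ * (w ^ n)⁻¹ + (w ^ (n + 2))⁻¹)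
      = 2 * (w ^ 2 + t ^ 2) / (c * t) ^ 2 * (w ^ (n + 2))⁻¹ := by
    field_simp
    ring
  rw [hrhs]
  gcongr
  rw [inv_le_iff_one_le_mul₀ (by positivity), div_mul_eq_mul_div, one_le_div (by positivity)]
  exact hsq

section NormedSpace

variable {V : Type*} [NormedAddCommGroup V]

theorem rpow_neg_mul_le_indicator_add {β a : ℝ} (hβ : 0 ≤ β) (ha₀ : 0 ≤ a) (ha₁ : a ≤ 1)
    (y : V) :
    ‖y‖ ^ (-β) * a ≤ (ball (0 : V) 1).indicator (fun z => ‖z‖ ^ (-β)) y + a := by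
  have hpow : 0 ≤ ‖y‖ ^ (-β) := Real.rpow_nonneg (norm_nonneg y) _
  by_cases hy : y ∈ ball (0 : V) 1
  · rw [Set.indicator_of_mem hy]
    nlinarith
  · rw [Set.indicator_of_notMem hy, zero_add]
    have hy1 : 1 ≤ ‖y‖ := by simpa using hy
    nlinarith [Real.rpow_le_one_of_one_le_of_nonpos hy1 (neg_nonpos.mpr hβ)]

variable [InnerProductSpace ℝ V]

theorem norm_smul_sub_smul_sq (a b : ℝ) (x y : V) :
    ‖a • x - b • y‖ ^ 2 = (a * ‖x‖ - b * ‖y‖) ^ 2 + 2 * (a * b) * (‖x‖ * ‖y‖ - ⟪x, y⟫) := by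
  rw [norm_sub_sq_real, norm_smul, norm_smul, real_inner_smul_left, real_inner_smul_right,
    Real.norm_eq_abs, Real.norm_eq_abs]
  ring_nf
  rw [sq_abs, sq_abs]
  ring

noncomputable def rpowNormSMul (α : ℝ) (x : V) : V := ‖x‖ ^ (α - 2) • x

theorem mul_rpow_mul_norm_sub_le_norm_rpowNormSMul_sub {α : ℝ} (hα₁ : 1 < α) (hα₂ : α ≤ 2)
    {x y : V} (hyx : ‖y‖ ≤ ‖x‖) :
    (α - 1) * ‖x‖ ^ (α - 2) * ‖x - y‖ ≤ ‖rpowNormSMul α x - rpowNormSMul α y‖ := by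
  rcases eq_or_ne y 0 with rfl | hy
  · simp only [rpowNormSMul, sub_zero, smul_zero, norm_smul, Real.norm_eq_abs,
      abs_of_nonneg (Real.rpow_nonneg (norm_nonneg x) _)]
    have := mul_nonneg (Real.rpow_nonneg (norm_nonneg x) (α - 2)) (norm_nonneg x)
    nlinarith
  set r := ‖x‖
  set s := ‖y‖
  have hs : 0 < s := norm_pos_iff.mpr hy
  have hr : 0 < r := hs.trans_le hyx
  set u := r ^ (α - 2)
  set v := s ^ (α - 2)
  have hu : 0 < u := Real.rpow_pos_of_pos hr _
  have huv : u ≤ v := Real.rpow_le_rpow_of_nonpos hs hyx (by linarith)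
  have hradial : (α - 1) * u * (r - s) ≤ u * r - v * s := by
    have h := mul_rpow_sub_one_mul_sub_le_rpow_sub_rpow (p := α - 1) (by linarith) (by linarith)
      hs.le hr
    have hpow : ∀ t : ℝ, 0 ≤ t → t ^ (α - 1) = t ^ (α - 2) * t := fun t ht => by
      rw [← Real.rpow_add_one' ht (by linarith)]; ring_nf
    rwa [hpow r hr.le, hpow s hs.le, show α - 1 - 1 = α - 2 by ring] at h
  have hradial₀ : 0 ≤ (α - 1) * u * (r - s) :=
    mul_nonneg (mul_nonneg (by linarith) hu.le) (sub_nonneg.mpr hyx)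
  have hangle : 0 ≤ r * s - ⟪x, y⟫ := sub_nonneg.mpr (real_inner_le_norm x y)
  have hcoeff : ((α - 1) * u) ^ 2 ≤ u * v := by
    have hc : (α - 1) ^ 2 ≤ 1 := by nlinarith
    rw [mul_pow]
    nlinarith [mul_le_mul_of_nonneg_left huv hu.le, mul_le_mul_of_nonneg_right hc (sq_nonneg u)]
  suffices ((α - 1) * u * ‖x - y‖) ^ 2 ≤ ‖u • x - v • y‖ ^ 2 from
    pow_le_pow_iff_left₀ (by positivity) (norm_nonneg _) two_ne_zero |>.mp this
  have hxy := norm_smul_sub_smul_sq 1 1 x y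
  rw [one_smul, one_smul] at hxy
  rw [mul_pow, hxy, norm_smul_sub_smul_sq]
  nlinarith [pow_le_pow_left₀ hradial₀ hradial 2, mul_le_mul_of_nonneg_right hcoeff hangle]

theorem mul_norm_sub_le_one_add_max_mul_norm_rpowNormSMul_sub {α : ℝ} (hα₁ : 1 < α)
    (hα₂ : α ≤ 2) (x y : V) :
    (α - 1) * ‖x - y‖ ≤ (1 + max ‖x‖ ‖y‖) * ‖rpowNormSMul α x - rpowNormSMul α y‖ := by
  wlog hyx : ‖y‖ ≤ ‖x‖ generalizing x y
  · rw [norm_sub_rev x, max_comm, norm_sub_rev (rpowNormSMul α x)]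
    exact this y x (le_of_not_ge hyx)
  rcases eq_or_ne x 0 with rfl | hx
  · simp [norm_le_zero_iff.mp (norm_zero (E := V) ▸ hyx)]
  rw [max_eq_left hyx]
  have hm : 0 < ‖x‖ := norm_pos_iff.mpr hx
  calc (α - 1) * ‖x - y‖
      = (1 + ‖x‖) * ((α - 1) * (1 + ‖x‖)⁻¹ * ‖x - y‖) := by field_simp
    _ ≤ (1 + ‖x‖) * ((α - 1) * ‖x‖ ^ (α - 2) * ‖x - y‖) := by
        gcongr
        exact inv_one_add_le_rpow hm (by linarith) (by linarith)
    _ ≤ (1 + ‖x‖) * ‖rpowNormSMul α x - rpowNormSMul α y‖ := by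
        gcongr
        exact mul_rpow_mul_norm_sub_le_norm_rpowNormSMul_sub hα₁ hα₂ hyx

theorem rpow_neg_two_mul_rpow_neg_ten_le {α : ℝ} (hα₁ : 1 < α) (hα₂ : α ≤ 2) (ξ σ : V) :
    ‖rpowNormSMul α ξ - rpowNormSMul α σ‖ ^ (-2 : ℝ) * (1 + ‖σ‖) ^ (-10 : ℝ) ≤
      2 / (α - 1) ^ 2 * ((ball (0 : V) 1).indicator (fun y => ‖y‖ ^ (-2 : ℝ)) (σ - ξ) +
        2 * (1 + ‖σ‖) ^ (-8 : ℝ)) := by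
  have hw : 1 ≤ 1 + ‖σ‖ := le_add_of_nonneg_right (norm_nonneg σ)
  have hc : 0 < α - 1 := by linarith
  rcases eq_or_ne σ ξ with rfl | hne
  · have hind : 0 ≤ (ball (0 : V) 1).indicator (fun y => ‖y‖ ^ (-2 : ℝ)) (σ - σ) :=
      Set.indicator_nonneg (fun y _ => Real.rpow_nonneg (norm_nonneg y) _) _
    rw [sub_self, norm_zero, Real.zero_rpow (by norm_num), zero_mul]
    positivity
  have hD : (α - 1) * ‖σ - ξ‖ ≤
      ((1 + ‖σ‖) + ‖σ - ξ‖) * ‖rpowNormSMul α ξ - rpowNormSMul α σ‖ := by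
    rw [norm_sub_rev σ]
    refine (mul_norm_sub_le_one_add_max_mul_norm_rpowNormSMul_sub hα₁ hα₂ ξ σ).trans ?_
    refine mul_le_mul_of_nonneg_right ?_ (norm_nonneg _)
    rw [add_assoc, add_le_add_iff_left, max_le_iff]
    constructor <;> linarith [norm_sub_norm_le ξ σ, norm_nonneg (ξ - σ)]
  have hmain := inv_sq_mul_inv_pow_le 8 hc (norm_sub_pos_iff.mpr hne) (by linarith) hD
  have hsplit := rpow_neg_mul_le_indicator_add zero_le_two (a := (1 + ‖σ‖) ^ (-8 : ℝ))
    (by positivity) (Real.rpow_le_one_of_one_le_of_nonpos hw (by norm_num)) (σ - ξ)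
  have hw10 : ((1 + ‖σ‖) ^ 10)⁻¹ ≤ ((1 + ‖σ‖) ^ 8)⁻¹ :=
    inv_anti₀ (by positivity) (pow_le_pow_right₀ hw (by norm_num))
  simp only [Real.rpow_neg (norm_nonneg _), Real.rpow_neg (by positivity : (0 : ℝ) ≤ 1 + ‖σ‖),
    Real.rpow_ofNat, Nat.reduceAdd] at hmain hsplit ⊢
  exact hmain.trans (mul_le_mul_of_nonneg_left (by linarith) (by positivity))

end NormedSpace

theorem integrable_indicator_ball_rpow_neg {F : Type*} [NormedAddCommGroup F] [NormedSpace ℝ F]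
    [FiniteDimensional ℝ F] [MeasurableSpace F] [BorelSpace F] {μ : Measure F}
    [μ.IsAddHaarMeasure] (hd : 1 ≤ Module.finrank ℝ F) {β : ℝ}
    (hβ : β < Module.finrank ℝ F) (r : ℝ) :
    Integrable ((ball (0 : F) r).indicator fun y => ‖y‖ ^ (-β)) μ := by
  refine (integrable_indicator_iff measurableSet_ball).mpr ?_
  refine integrableOn_ball_of_norm_le_rpow (C := 1) hd hβ (ae_of_all _ fun y => ?_)
    (measurable_norm.pow_const _).aestronglyMeasurable
  rw [one_mul, Real.norm_of_nonneg (Real.rpow_nonneg (norm_nonneg y) _)]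

/-- Uniform bound `∫ ‖ ‖ξ‖^{α-2}ξ − ‖σ‖^{α-2}σ ‖⁻² (1+‖σ‖)⁻¹⁰ dσ ≤ C`, used to show
that the phase correction `B_α` is well defined. -/
theorem stmt_14 (α : ℝ) (hα₁ : 1 < α) (hα₂ : α < 2) :
    ∃ C : ℝ, 0 < C ∧
      ∀ ξ : EuclideanSpace ℝ (Fin 3),
        (∫⁻ σ : EuclideanSpace ℝ (Fin 3),
            ENNReal.ofReal
              (‖(‖ξ‖ ^ (α - 2)) • ξ - (‖σ‖ ^ (α - 2)) • σ‖ ^ (-2 : ℝ) *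
                (1 + ‖σ‖) ^ (-10 : ℝ))) ≤ ENNReal.ofReal C := by
  set a := (ball (0 : EuclideanSpace ℝ (Fin 3)) 1).indicator fun y => ‖y‖ ^ (-2 : ℝ)
  set b := fun σ : EuclideanSpace ℝ (Fin 3) => (1 + ‖σ‖) ^ (-8 : ℝ)
  have ha : Integrable a := integrable_indicator_ball_rpow_neg (by simp) (by simp; norm_num) 1
  have hb : Integrable b := integrable_one_add_norm (by simp; norm_num)
  have ha₀ : 0 ≤ a := Set.indicator_nonneg fun y _ => Real.rpow_nonneg (norm_nonneg y) _
  have hb₀ : 0 ≤ b := fun σ => Real.rpow_nonneg (by positivity) _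
  set K := 2 / (α - 1) ^ 2
  have hK : 0 ≤ K := by positivity
  have hI : 0 ≤ K * ((∫ y, a y) + 2 * ∫ σ, b σ) := mul_nonneg hK
    (add_nonneg (integral_nonneg ha₀) (mul_nonneg zero_le_two (integral_nonneg hb₀)))
  refine ⟨K * ((∫ y, a y) + 2 * ∫ σ, b σ) + 1, by linarith, fun ξ => ?_⟩
  have hdom : Integrable fun σ => K * (a (σ - ξ) + 2 * b σ) :=
    ((ha.comp_sub_right ξ).add (hb.const_mul 2)).const_mul K
  calc _ ≤ ∫⁻ σ, ENNReal.ofReal (K * (a (σ - ξ) + 2 * b σ)) :=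
        lintegral_mono fun σ => ENNReal.ofReal_le_ofReal
          (rpow_neg_two_mul_rpow_neg_ten_le hα₁ hα₂.le ξ σ)
    _ = ENNReal.ofReal (∫ σ, K * (a (σ - ξ) + 2 * b σ)) :=
        (ofReal_integral_eq_lintegral_ofReal hdom (ae_of_all _ fun σ =>
          mul_nonneg hK (add_nonneg (ha₀ _) (mul_nonneg zero_le_two (hb₀ σ))))).symm
    _ = ENNReal.ofReal (K * ((∫ y, a y) + 2 * ∫ σ, b σ)) := by
        rw [integral_const_mul, integral_add (ha.comp_sub_right ξ) (hb.const_mul 2),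
          integral_sub_right_eq_self, integral_const_mul]
    _ ≤ _ := ENNReal.ofReal_le_ofReal (by linarith)
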